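/- Let X and Y be complex Banach spaces, let (x_k*)_{k≥0} be a sequence in X* with ‖x_k*‖ = 1 for all k converging to 0 in the weak* topology (x_k*(x) → 0 for every x ∈ X), and let U : c₀ → Y be an isomorphic embedding. For α ∈ ℓ∞ let σ(α) ∈ L(X,Y) be the operator σ(α)x = Σ_{k≥0} α_k x_k*(x) U(e_k). Then σ(α) is a compact operator if and only if α ∈ c₀ (i.e. α_k → 0 as k → ∞). -/

import Mathlib

set_option maxHeartbeats 1000000
set_option synthInstance.maxHeartbeats 400000


open Filter Topology NormedSpace
open scoped ENNReal

noncomputable section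

/-- `ℓ∞` : the Banach space of bounded complex sequences with the sup norm. -/
abbrev LinftySeq : Type := ↥(lp (fun _ : ℕ => ℂ) ∞)

/-- The predicate on `ℓ∞` of belonging to `c₀` (i.e. tending to zero). -/
def IsC0 (α : LinftySeq) : Prop := Tendsto (fun k => α k) atTop (𝓝 (0 : ℂ))

/-- `c₀` as a (closed) submodule of `ℓ∞`, with the induced sup norm. -/
def c0 : Submodule ℂ LinftySeq where
  carrier := {α | IsC0 α}
  add_mem' := by
    intro a b ha hb
    have := ha.add hb
    simpa [IsC0, lp.coeFn_add] using this
  zero_mem' := by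
    simp only [Set.mem_setOf_eq, IsC0, lp.coeFn_zero, Pi.zero_apply]
    exact tendsto_const_nhds
  smul_mem' := by
    intro c a ha
    have := ha.const_mul c
    simpa [IsC0, lp.coeFn_smul, smul_eq_mul] using this

/-- The subspace `K(X,Y)` of compact operators inside `L(X,Y)`. -/
abbrev KOp (X Y : Type*) [NormedAddCommGroup X] [NormedSpace ℂ X]
    [NormedAddCommGroup Y] [NormedSpace ℂ Y] : Submodule ℂ (X →L[ℂ] Y) :=
  compactOperator (RingHom.id ℂ) X Y

/-- The canonical basis vector `e k` of `c₀`. -/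
def eSeq (k : ℕ) : ↥c0 :=
  ⟨lp.single ∞ k (1 : ℂ), by
    have h : ∀ᶠ j in atTop, (lp.single ∞ k (1 : ℂ) : ∀ _ : ℕ, ℂ) j = 0 := by
      filter_upwards [eventually_gt_atTop k] with j hj
      exact lp.single_apply_ne ∞ k _ (by omega)
    exact Tendsto.congr' (h.mono fun j hj => hj.symm) tendsto_const_nhds⟩

lemma c0_norm (v : ↥c0) : ‖v‖ = ‖(v : LinftySeq)‖ := rfl

lemma c0_coord_le (γ : ↥c0) (k : ℕ) : ‖(γ : LinftySeq) k‖ ≤ ‖γ‖ :=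
  lp.norm_apply_le_norm (by norm_num) (γ : LinftySeq) k

lemma c0_isC0 (γ : ↥c0) : Tendsto (fun k => (γ : LinftySeq) k) atTop (𝓝 (0:ℂ)) := γ.2

lemma c0_coe_sub (a b : ↥c0) (j : ℕ) :
    ((a - b : ↥c0) : LinftySeq) j = (a : LinftySeq) j - (b : LinftySeq) j := by
  have : ((a - b : ↥c0) : LinftySeq) = (a : LinftySeq) - (b : LinftySeq) := rfl
  rw [this, lp.coeFn_sub, Pi.sub_apply]

lemma sum_eSeq_apply (F : Finset ℕ) (c : ℕ → ℂ) (j : ℕ) :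
    ((∑ k ∈ F, c k • eSeq k : ↥c0) : LinftySeq) j = if j ∈ F then c j else 0 := by
  classical
  have h1 : ((∑ k ∈ F, c k • eSeq k : ↥c0) : LinftySeq)
      = ∑ k ∈ F, c k • (lp.single ∞ k (1:ℂ)) := by
    rw [Submodule.coe_sum]
    rfl
  rw [h1, lp.coeFn_sum, Finset.sum_apply]
  have h2 : ∀ k, (c k • (lp.single ∞ k (1:ℂ)) : LinftySeq) j
      = if j = k then c k else 0 := by
    intro k
    rw [lp.coeFn_smul, Pi.smul_apply]
    by_cases h : j = k
    · subst h; rw [lp.single_apply_self, if_pos rfl, smul_eq_mul, mul_one]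
    · rw [lp.single_apply_ne ∞ k _ h, if_neg h, smul_zero]
  simp only [h2]
  simp [Finset.sum_ite_eq' F j c]

lemma hasSum_eSeq (β : ↥c0) : HasSum (fun k => ((β : LinftySeq) k) • eSeq k) β := by
  rw [HasSum, Metric.tendsto_nhds]
  intro ε hε
  obtain ⟨N, hN⟩ : ∃ N, ∀ k ≥ N, ‖(β : LinftySeq) k‖ < ε/2 := by
    have h := (c0_isC0 β).eventually (Metric.ball_mem_nhds (0:ℂ) (by positivity : (0:ℝ) < ε/2))
    simpa only [Metric.mem_ball, dist_zero_right, eventually_atTop] using h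
  filter_upwards [eventually_ge_atTop (Finset.range N)] with F hF
  rw [dist_eq_norm, c0_norm]
  have hb : ∀ j, ‖(((∑ k ∈ F, ((β : LinftySeq) k) • eSeq k) - β : ↥c0) : LinftySeq) j‖ ≤ ε/2 := by
    intro j
    rw [c0_coe_sub, sum_eSeq_apply]
    by_cases h : j ∈ F
    · rw [if_pos h, sub_self, norm_zero]; positivity
    · rw [if_neg h, zero_sub, norm_neg]
      have hj : N ≤ j := by
        by_contra hj
        exact h (hF (Finset.mem_range.mpr (by omega)))
      exact (hN j hj).le
  exact lt_of_le_of_lt (lp.norm_le_of_forall_le (by positivity) hb) (by linarith)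

lemma exists_unit {X : Type*} [NormedAddCommGroup X] [NormedSpace ℂ X]
    (f : StrongDual ℂ X) (hf : ‖f‖ = 1) : ∃ x : X, ‖x‖ ≤ 1 ∧ (1:ℝ)/2 ≤ ‖f x‖ := by
  by_contra h
  push_neg at h
  have hle : ‖f‖ ≤ 1/2 := by
    refine ContinuousLinearMap.opNorm_le_bound _ (by norm_num) ?_
    intro x
    rcases eq_or_ne x 0 with rfl | hx0
    · simp
    · have hxpos : (0:ℝ) < ‖x‖ := norm_pos_iff.mpr hx0
      set u : X := ((‖x‖ : ℂ))⁻¹ • x with hu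
      have hun : ‖u‖ ≤ 1 := by
        rw [hu, norm_smul, norm_inv, Complex.norm_real, Real.norm_of_nonneg hxpos.le,
          inv_mul_cancel₀ hxpos.ne']
      have hlt := h u hun
      have hxu : x = ((‖x‖ : ℂ)) • u := by
        rw [hu, smul_smul, mul_inv_cancel₀ (by exact_mod_cast hxpos.ne'), one_smul]
      have hx_eq : ‖f x‖ = ‖x‖ * ‖f u‖ := by
        conv_lhs => rw [hxu]
        rw [map_smul, norm_smul, Complex.norm_real, Real.norm_of_nonneg hxpos.le]
      rw [hx_eq]
      calc ‖x‖ * ‖f u‖ ≤ ‖x‖ * (1/2) := mul_le_mul_of_nonneg_left hlt.le hxpos.le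
      _ = 1/2 * ‖x‖ := by ring
  rw [hf] at hle; linarith

lemma cauchySeq_of_lower {Y : Type*} [NormedAddCommGroup Y] [NormedSpace ℂ Y]
    (U : ↥c0 →L[ℂ] Y) {c : ℝ} (hc : 0 < c) (hUc : ∀ v, c * ‖v‖ ≤ ‖U v‖)
    {β : ℕ → ↥c0} (h : CauchySeq fun n => U (β n)) : CauchySeq β := by
  rw [Metric.cauchySeq_iff] at h ⊢
  intro ε hε
  obtain ⟨N, hN⟩ := h (c * ε) (by positivity)
  refine ⟨N, fun m hm n hn => ?_⟩
  have h1 := hN m hm n hn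
  rw [dist_eq_norm, ← map_sub] at h1
  have h2 := hUc (β m - β n)
  rw [dist_eq_norm]
  exact lt_of_mul_lt_mul_left (lt_of_le_of_lt h2 h1) hc.le

lemma c0_contradiction {φ : ℕ → ℕ} (hφ : StrictMono φ) {ε : ℝ} (hε : 0 < ε)
    {β : ℕ → ↥c0} (hco : ∀ n, ε/2 ≤ ‖(β n : LinftySeq) (φ n)‖)
    (hcs : CauchySeq β) : False := by
  obtain ⟨N, hN⟩ := Metric.cauchySeq_iff.mp hcs (ε/8) (by positivity)
  obtain ⟨M, hM⟩ : ∃ M, ∀ k ≥ M, ‖((β N) : LinftySeq) k‖ < ε/8 := by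
    have h := (c0_isC0 (β N)).eventually
      (Metric.ball_mem_nhds (0:ℂ) (by positivity : (0:ℝ) < ε/8))
    simpa only [Metric.mem_ball, dist_zero_right, eventually_atTop] using h
  set m := max N M with hm
  have hφm : M ≤ φ m := le_trans (le_max_right N M) hφ.le_apply
  have h1 : ‖β m - β N‖ < ε/8 := by
    have := hN m (le_max_left N M) N le_rfl
    rwa [dist_eq_norm] at this
  have key : ε/2 ≤ ε/8 + ε/8 := by
    calc ε/2 ≤ ‖(β m : LinftySeq) (φ m)‖ := hco m
    _ = ‖((β m - β N : ↥c0) : LinftySeq) (φ m) + ((β N) : LinftySeq) (φ m)‖ := by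
        rw [c0_coe_sub]; ring_nf
    _ ≤ ‖((β m - β N : ↥c0) : LinftySeq) (φ m)‖ + ‖((β N) : LinftySeq) (φ m)‖ :=
        norm_add_le _ _
    _ ≤ ‖β m - β N‖ + ‖((β N) : LinftySeq) (φ m)‖ := by
        have := c0_coord_le (β m - β N) (φ m)
        linarith
    _ ≤ ε/8 + ε/8 := add_le_add h1.le (hM _ hφm).le
  linarith

lemma trunc_norm_le (w : ↥c0) (n : ℕ) {C : ℝ} (hC : 0 ≤ C)
    (h : ∀ j, n ≤ j → ‖(w : LinftySeq) j‖ ≤ C) :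
    ‖(∑ k ∈ Finset.range n, ((w : LinftySeq) k) • eSeq k) - w‖ ≤ C := by
  rw [c0_norm]
  refine lp.norm_le_of_forall_le hC ?_
  intro j
  rw [c0_coe_sub, sum_eSeq_apply]
  by_cases hj : j ∈ Finset.range n
  · rw [if_pos hj, sub_self, norm_zero]; exact hC
  · rw [if_neg hj, zero_sub, norm_neg]
    exact h j (Nat.le_of_not_lt (fun hlt => hj (Finset.mem_range.mpr hlt)))

def tMap {X : Type*} [NormedAddCommGroup X] [NormedSpace ℂ X] (xs : ℕ → StrongDual ℂ X)
    (hxs : ∀ k, ‖xs k‖ = 1) (hw : ∀ x : X, Tendsto (fun k => xs k x) atTop (𝓝 (0:ℂ)))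
    (α : LinftySeq) (x : X) : ↥c0 :=
  ⟨⟨fun k => α k * xs k x, memℓp_infty ⟨‖α‖ * ‖x‖, by
      rintro r ⟨k, rfl⟩
      simp only
      rw [norm_mul]
      have h1 : ‖α k‖ ≤ ‖α‖ := lp.norm_apply_le_norm (by norm_num) α k
      have h2 : ‖xs k x‖ ≤ ‖x‖ := by
        have := (xs k).le_opNorm x
        rwa [hxs k, one_mul] at this
      exact mul_le_mul h1 h2 (norm_nonneg _) (norm_nonneg _)⟩⟩, by
    have hg : Tendsto (fun k => ‖α‖ * ‖xs k x‖) atTop (𝓝 0) := by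
      simpa using ((hw x).norm).const_mul ‖α‖
    have h1 : Tendsto (fun k => α k * xs k x) atTop (𝓝 (0:ℂ)) := by
      refine squeeze_zero_norm (fun k => ?_) hg
      rw [norm_mul]
      exact mul_le_mul_of_nonneg_right (lp.norm_apply_le_norm (by norm_num) α k)
        (norm_nonneg _)
    exact h1⟩

lemma tMap_apply {X : Type*} [NormedAddCommGroup X] [NormedSpace ℂ X] (xs : ℕ → StrongDual ℂ X)
    (hxs : ∀ k, ‖xs k‖ = 1) (hw : ∀ x : X, Tendsto (fun k => xs k x) atTop (𝓝 (0:ℂ)))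
    (α : LinftySeq) (x : X) (k : ℕ) :
    ((tMap xs hxs hw α x : LinftySeq)) k = α k * xs k x := rfl

lemma S_eq {X Y : Type*} [NormedAddCommGroup X] [NormedSpace ℂ X]
    [NormedAddCommGroup Y] [NormedSpace ℂ Y] [CompleteSpace Y]
    (xs : ℕ → StrongDual ℂ X) (hxs : ∀ k, ‖xs k‖ = 1)
    (hw : ∀ x : X, Tendsto (fun k => xs k x) atTop (𝓝 (0:ℂ)))
    (U : ↥c0 →L[ℂ] Y) (α : LinftySeq) (S : X →L[ℂ] Y)
    (hS : ∀ x : X, HasSum (fun k => (α k * xs k x) • U (eSeq k)) (S x)) (x : X) :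
    S x = U (tMap xs hxs hw α x) := by
  have h1 := hasSum_eSeq (tMap xs hxs hw α x)
  have h2 := h1.mapL U
  simp only [map_smul] at h2
  exact (hS x).unique h2

lemma rankone_compact {X Y : Type*} [NormedAddCommGroup X] [NormedSpace ℂ X]
    [NormedAddCommGroup Y] [NormedSpace ℂ Y] (f : X →L[ℂ] ℂ) (y : Y) :
    IsCompactOperator ⇑(f.smulRight y) := by
  have hf : IsCompactOperator ⇑f := by
    refine ⟨Metric.closedBall 0 ‖f‖, isCompact_closedBall _ _, ?_⟩
    refine Filter.mem_of_superset (Metric.closedBall_mem_nhds (0:X) one_pos) ?_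
    intro x hx
    simp only [Metric.mem_closedBall, dist_zero_right, Set.mem_preimage] at hx ⊢
    calc ‖f x‖ ≤ ‖f‖ * ‖x‖ := f.le_opNorm x
    _ ≤ ‖f‖ * 1 := by gcongr
    _ = ‖f‖ := mul_one _
  have hg : Continuous (fun z : ℂ => z • y) := continuous_id.smul continuous_const
  exact hf.continuous_comp hg


lemma hb_lemma {X Y : Type*} [NormedAddCommGroup X] [NormedSpace ℂ X]
    [NormedAddCommGroup Y] [NormedSpace ℂ Y] [CompleteSpace Y]
    (xs : ℕ → StrongDual ℂ X) (hxs : ∀ k, ‖xs k‖ = 1)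
    (hw : ∀ x : X, Tendsto (fun k => xs k x) atTop (𝓝 (0:ℂ)))
    (U : ↥c0 →L[ℂ] Y) (α : LinftySeq) (S : X →L[ℂ] Y)
    (hS : ∀ x : X, HasSum (fun k => (α k * xs k x) • U (eSeq k)) (S x))
    {γ : ℝ} (hγpos : 0 < γ) (n : ℕ) (hN : ∀ k ≥ n, ‖α k‖ < γ) :
    ‖(∑ k ∈ Finset.range n, (xs k).smulRight ((α k) • U (eSeq k))) - S‖ ≤ ‖U‖ * γ := by
  refine ContinuousLinearMap.opNorm_le_bound _ (by positivity) ?_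
  intro v
  set w : ↥c0 := tMap xs hxs hw α v with hwdef
  have hp : (∑ k ∈ Finset.range n, (xs k).smulRight ((α k) • U (eSeq k))) v
      = U (∑ k ∈ Finset.range n, ((w : LinftySeq) k) • eSeq k) := by
    rw [map_sum]
    simp only [ContinuousLinearMap.sum_apply, ContinuousLinearMap.smulRight_apply]
    refine Finset.sum_congr rfl fun k _ => ?_
    rw [map_smul, smul_smul, hwdef, tMap_apply, mul_comm]
  set p : ↥c0 := (∑ k ∈ Finset.range n, ((w : LinftySeq) k) • eSeq k) - w with hpdef
  have heq : ((∑ k ∈ Finset.range n, (xs k).smulRight ((α k) • U (eSeq k))) - S) v = U p := by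
    rw [ContinuousLinearMap.sub_apply, hp, S_eq xs hxs hw U α S hS v, hpdef, map_sub]
  rw [heq]
  have hple : ‖p‖ ≤ γ * ‖v‖ := by
    rw [hpdef]
    refine trunc_norm_le w n (by positivity) ?_
    intro j hj
    rw [hwdef, tMap_apply, norm_mul]
    have h2 : ‖xs j v‖ ≤ ‖v‖ := by
      have := (xs j).le_opNorm v
      rwa [hxs j, one_mul] at this
    exact mul_le_mul (hN j hj).le h2 (norm_nonneg (xs j v)) hγpos.le
  have h3 : ‖U p‖ ≤ ‖U‖ * ‖p‖ := U.le_opNorm p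
  have h4 : ‖U‖ * ‖p‖ ≤ ‖U‖ * (γ * ‖v‖) := mul_le_mul_of_nonneg_left hple (norm_nonneg U)
  have h5 : ‖U‖ * (γ * ‖v‖) = ‖U‖ * γ * ‖v‖ := by ring
  exact h3.trans (h4.trans_eq h5)

lemma backward_dir {X Y : Type*} [NormedAddCommGroup X] [NormedSpace ℂ X]
    [NormedAddCommGroup Y] [NormedSpace ℂ Y] [CompleteSpace Y]
    (xs : ℕ → StrongDual ℂ X) (hxs : ∀ k, ‖xs k‖ = 1)
    (hw : ∀ x : X, Tendsto (fun k => xs k x) atTop (𝓝 (0:ℂ)))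
    (U : ↥c0 →L[ℂ] Y) (α : LinftySeq) (S : X →L[ℂ] Y)
    (hS : ∀ x : X, HasSum (fun k => (α k * xs k x) • U (eSeq k)) (S x))
    (hα0 : IsC0 α) : IsCompactOperator ⇑S := by
  classical
  set Sn : ℕ → X →L[ℂ] Y := fun n =>
    ∑ k ∈ Finset.range n, (xs k).smulRight ((α k) • U (eSeq k)) with hSn
  have hSncpt : ∀ n, IsCompactOperator ⇑(Sn n) := by
    intro n
    induction n with
    | zero => simpa [Sn] using (isCompactOperator_zero (M₁ := X) (M₂ := Y))
    | succ n ih =>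
        have heq : Sn (n+1) = Sn n + (xs n).smulRight ((α n) • U (eSeq n)) := by
          rw [hSn]
          exact Finset.sum_range_succ _ n
        rw [heq, ContinuousLinearMap.coe_add']
        exact ih.add (rankone_compact (xs n) ((α n) • U (eSeq n)))
  have hconv : Tendsto Sn atTop (𝓝 S) := by
    rw [Metric.tendsto_atTop]
    intro δ hδ
    set γ : ℝ := δ / (2 * (‖U‖ + 1)) with hγ
    have hγpos : 0 < γ := by positivity
    obtain ⟨N, hN⟩ : ∃ N, ∀ k ≥ N, ‖α k‖ < γ := by
      have h := hα0.eventually (Metric.ball_mem_nhds (0:ℂ) hγpos)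
      simpa only [Metric.mem_ball, dist_zero_right, eventually_atTop] using h
    refine ⟨N, fun n hn => ?_⟩
    rw [dist_eq_norm]
    have hb : ‖Sn n - S‖ ≤ ‖U‖ * γ :=
      hb_lemma xs hxs hw U α S hS hγpos n (fun k hk => hN k (le_trans hn hk))
    refine lt_of_le_of_lt hb ?_
    rw [hγ, mul_div_assoc', div_lt_iff₀ (by positivity)]
    nlinarith [norm_nonneg U]
  exact isCompactOperator_of_tendsto hconv (Filter.Eventually.of_forall hSncpt)

lemma forward_dir {X Y : Type*} [NormedAddCommGroup X] [NormedSpace ℂ X]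
    [NormedAddCommGroup Y] [NormedSpace ℂ Y] [CompleteSpace Y]
    (xs : ℕ → StrongDual ℂ X) (hxs : ∀ k, ‖xs k‖ = 1)
    (hw : ∀ x : X, Tendsto (fun k => xs k x) atTop (𝓝 (0:ℂ)))
    (U : ↥c0 →L[ℂ] Y) {c : ℝ} (hc : 0 < c) (hUc : ∀ v, c * ‖v‖ ≤ ‖U v‖)
    (α : LinftySeq) (S : X →L[ℂ] Y)
    (hS : ∀ x : X, HasSum (fun k => (α k * xs k x) • U (eSeq k)) (S x))
    (hcpt : IsCompactOperator ⇑S) : IsC0 α := by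
  by_contra hα
  obtain ⟨ε, hε, hfreq⟩ : ∃ ε > 0, ∀ N : ℕ, ∃ n ≥ N, ε ≤ ‖α n‖ := by
    rw [IsC0, Metric.tendsto_atTop] at hα
    push_neg at hα
    obtain ⟨ε, hε, h⟩ := hα
    refine ⟨ε, hε, fun N => ?_⟩
    obtain ⟨n, hn, h'⟩ := h N
    exact ⟨n, hn, by simpa [dist_zero_right] using h'⟩
  obtain ⟨φ, hφmono, hφ⟩ := extraction_of_frequently_atTop (frequently_atTop.mpr
    (fun N => (hfreq N).imp fun n h => ⟨h.1, h.2⟩))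
  choose x hx1 hx2 using fun n => exists_unit (xs (φ n)) (hxs (φ n))
  have hco : ∀ n, ε/2 ≤ ‖((tMap xs hxs hw α (x n) : LinftySeq)) (φ n)‖ := by
    intro n
    rw [tMap_apply, norm_mul]
    calc ε/2 = ε * (1/2) := by ring
    _ ≤ ‖α (φ n)‖ * ‖xs (φ n) (x n)‖ :=
        mul_le_mul (hφ n) (hx2 n) (by norm_num) (norm_nonneg _)
  have hKc : IsCompact (closure (⇑S '' Metric.closedBall 0 1)) := by
    have := (isCompactOperator_iff_isCompact_closure_image_closedBall
      (S : X →ₗ[ℂ] Y) one_pos).mp hcpt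
    simpa using this
  have hmem' : ∀ n, S (x n) ∈ closure (⇑S '' Metric.closedBall 0 1) := fun n =>
    subset_closure ⟨x n, by
      simpa [Metric.mem_closedBall, dist_zero_right] using hx1 n, rfl⟩
  obtain ⟨y, -, ψ, hψmono, hty⟩ := hKc.tendsto_subseq hmem'
  have hty' : Tendsto (fun j => U (tMap xs hxs hw α (x (ψ j)))) atTop (𝓝 y) := by
    refine hty.congr fun j => ?_
    simp only [Function.comp_apply]
    exact S_eq xs hxs hw U α S hS (x (ψ j))
  have hcs : CauchySeq fun j => tMap xs hxs hw α (x (ψ j)) :=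
    cauchySeq_of_lower U hc hUc hty'.cauchySeq
  exact c0_contradiction (hφmono.comp hψmono) hε
    (fun j => hco (ψ j)) hcs

theorem stmt17 (X Y : Type*) [NormedAddCommGroup X] [NormedSpace ℂ X] [CompleteSpace X]
    [NormedAddCommGroup Y] [NormedSpace ℂ Y] [CompleteSpace Y]
    (xs : ℕ → StrongDual ℂ X) (hxs : ∀ k, ‖xs k‖ = 1)
    (hw : ∀ x : X, Tendsto (fun k => xs k x) atTop (𝓝 (0 : ℂ)))
    (U : ↥c0 →L[ℂ] Y) (hU : ∃ c > 0, ∀ v, c * ‖v‖ ≤ ‖U v‖)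
    (α : LinftySeq) (S : X →L[ℂ] Y)
    (hS : ∀ x : X, HasSum (fun k => (α k * xs k x) • U (eSeq k)) (S x)) :
    IsCompactOperator ⇑S ↔ IsC0 α := by
  obtain ⟨c, hc, hUc⟩ := hU
  exact ⟨fun hcpt => forward_dir xs hxs hw U hc hUc α S hS hcpt,
    fun hα0 => backward_dir xs hxs hw U α S hS hα0⟩
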